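/- Every metrizable indecomposable continuum with more than one point has a dense subset that is widely-connected. -/

import Mathlib

universe u

open Set

/-- A continuum is indecomposable if it is not the union of two proper subcontinua. -/
def Indecomposable (X : Type u) [TopologicalSpace X] : Prop :=
  ¬ ∃ A B : Set X, IsCompact A ∧ IsConnected A ∧ A ≠ univ ∧
      IsCompact B ∧ IsConnected B ∧ B ≠ univ ∧ A ∪ B = univ

/-- A subset `W` of a space is widely-connected if it is connected and every
connected subset of `W` with more than one point is dense in `W`. -/
def WidelyConnectedSubset {X : Type u} [TopologicalSpace X] (W : Set X) : Prop :=
  IsConnected W ∧ ∀ A ⊆ W, A.Nontrivial → IsPreconnected A → W ⊆ closure A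

/-!
Proper subcontinua of an indecomposable continuum `X` are nowhere dense, so the relation "lie in a
common proper subcontinuum" is a countable union of closed nowhere dense subsets of `X × X`, and
Mycielski's theorem yields continuum many distinct composants. A second countable space has at most
continuum many pairs `(U, V)` of disjoint nonempty open sets, and by boundary bumping every
composant meets `X \ (U ∪ V)`; choosing such a point for each pair, in distinct composants, gives a
set `W` that no such pair covers, hence connected since `X` is completely normal. A nontrivial
connected subset of `W` meets two composants, so its closure is no proper subcontinuum: it is dense.
-/

open Function TopologicalSpace

section

variable {X : Type*} [TopologicalSpace X]

theorem IsClosed.connectedComponentIn {F : Set X} (hF : IsClosed F) (x : X) :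
    IsClosed (connectedComponentIn F x) := by
  by_cases hx : x ∈ F
  · refine closure_subset_iff_isClosed.mp <|
      isPreconnected_connectedComponentIn.closure.subset_connectedComponentIn
        (subset_closure (mem_connectedComponentIn hx)) ?_
    exact closure_minimal (connectedComponentIn_subset F x) hF
  · simp [connectedComponentIn_eq_empty hx]

theorem isConnected_of_connectedComponentIn_inter_nonempty {F K : Set X} (hK : IsConnected K)
    (hKF : K ⊆ F) (h : ∀ y ∈ F, (connectedComponentIn F y ∩ K).Nonempty) : IsConnected F := by
  obtain ⟨k, hk⟩ := hK.nonempty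
  refine ⟨⟨k, hKF hk⟩, isPreconnected_of_forall k fun y hy => ?_⟩
  obtain ⟨z, hzC, hzK⟩ := h y hy
  exact ⟨connectedComponentIn F y ∪ K, union_subset (connectedComponentIn_subset F y) hKF,
    Or.inr hk, Or.inl (mem_connectedComponentIn hy),
    isPreconnected_connectedComponentIn.union z hzC hzK hK.isPreconnected⟩

theorem exists_isClopen_of_disjoint_connectedComponent [CompactSpace X] [T2Space X] {x : X}
    {G : Set X} (hG : IsClosed G) (hxG : Disjoint (connectedComponent x) G) :
    ∃ E, IsClopen E ∧ x ∈ E ∧ Disjoint E G := by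
  have hGc : IsClosed (ConnectedComponents.mk '' G) :=
    (hG.isCompact.image ConnectedComponents.continuous_coe).isClosed
  have hx : ConnectedComponents.mk x ∉ ConnectedComponents.mk '' G := by
    rintro ⟨y, hyG, hyx⟩
    exact hxG.ne_of_mem (ConnectedComponents.coe_eq_coe'.1 hyx) hyG rfl
  -- The space of components is compact, Hausdorff and totally disconnected.
  obtain ⟨V, hV, hxV, hVG⟩ := compact_exists_isClopen_in_isOpen hGc.isOpen_compl hx
  exact ⟨ConnectedComponents.mk ⁻¹' V, hV.preimage ConnectedComponents.continuous_coe, hxV,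
    disjoint_left.2 fun y hyV hyG => hVG hyV ⟨y, hyG, rfl⟩⟩

/-- Boundary bumping. -/
theorem exists_mem_connectedComponentIn_inter_frontier [CompactSpace X] [T2Space X]
    [ConnectedSpace X] {F : Set X} (hF : IsClosed F) (hFne : F ≠ univ) {x : X} (hx : x ∈ F) :
    (connectedComponentIn F x ∩ frontier F).Nonempty := by
  have : CompactSpace F := isCompact_iff_compactSpace.mp hF.isCompact
  by_contra h
  obtain ⟨E, hE, hxE, hEfr⟩ := exists_isClopen_of_disjoint_connectedComponent (x := ⟨x, hx⟩)
    (isClosed_frontier.preimage continuous_subtype_val) <| disjoint_left.2 fun y hyC hyfr =>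
      h ⟨y, by rw [connectedComponentIn_eq_image hx]; exact mem_image_of_mem _ hyC, hyfr⟩
  obtain ⟨O, hO, rfl⟩ := isOpen_induced_iff.mp hE.isOpen
  -- A relatively clopen subset of `F` missing `frontier F` is clopen in `X`.
  have hEO : ((↑) '' ((↑) ⁻¹' O : Set F) : Set X) = interior F ∩ O := by
    rw [Subtype.image_preimage_coe]
    refine Subset.antisymm (fun y ⟨hyF, hyO⟩ => ⟨?_, hyO⟩)
      (inter_subset_inter_left _ interior_subset)
    by_contra hyi
    exact disjoint_left.1 hEfr (show (⟨y, hyF⟩ : F) ∈ (↑) ⁻¹' O from hyO)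
      ⟨subset_closure hyF, hyi⟩
  have hclopen : IsClopen ((↑) '' ((↑) ⁻¹' O : Set F) : Set X) :=
    ⟨(hE.isClosed.isCompact.image continuous_subtype_val).isClosed,
      hEO ▸ isOpen_interior.inter hO⟩
  rcases isClopen_iff.mp hclopen with hemp | huniv
  · exact (hemp ▸ mem_image_of_mem _ hxE : x ∈ (∅ : Set X))
  · exact hFne (eq_univ_of_univ_subset (huniv ▸ Subtype.coe_image_subset F _))

structure IsProperSubcontinuum (K : Set X) : Prop where
  isCompact : IsCompact K
  isConnected : IsConnected K
  ne_univ : K ≠ univ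

theorem isProperSubcontinuum_connectedComponentIn [CompactSpace X] {F : Set X} (hF : IsClosed F)
    (hFne : F ≠ univ) {x : X} (hx : x ∈ F) : IsProperSubcontinuum (connectedComponentIn F x) :=
  ⟨(hF.connectedComponentIn x).isCompact, isConnected_connectedComponentIn_iff.2 hx,
    fun h => hFne (eq_univ_of_univ_subset (h ▸ connectedComponentIn_subset F x))⟩

theorem Indecomposable.union_ne_univ (hX : Indecomposable X) {A B : Set X}
    (hA : IsProperSubcontinuum A) (hB : IsProperSubcontinuum B) : A ∪ B ≠ univ := fun h =>
  hX ⟨A, B, hA.1, hA.2, hA.3, hB.1, hB.2, hB.3, h⟩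

theorem IsConnected.isProperSubcontinuum_compl [CompactSpace X] [T2Space X] [ConnectedSpace X]
    {K U V : Set X} (hK : IsConnected K) (hU : IsOpen U) (hV : IsOpen V) (hUV : Disjoint U V)
    (hVne : V.Nonempty) (hKUV : Kᶜ ⊆ U ∪ V) (hKV : Disjoint K V) : IsProperSubcontinuum Vᶜ := by
  have hVc : Vᶜ ≠ univ := compl_ne_univ.2 hVne
  refine ⟨hV.isClosed_compl.isCompact, isConnected_of_connectedComponentIn_inter_nonempty hK
    (subset_compl_iff_disjoint_right.2 hKV) fun y hy => ?_, hVc⟩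
  obtain ⟨z, hzC, hzfr⟩ := exists_mem_connectedComponentIn_inter_frontier hV.isClosed_compl hVc hy
  refine ⟨z, hzC, not_not.1 fun hzK => ?_⟩
  rw [frontier_compl, hV.frontier_eq] at hzfr
  rcases hKUV hzK with hzU | hzV
  exacts [(hUV.closure_right hU).ne_of_mem hzU hzfr.1 rfl, hzfr.2 hzV]

theorem Indecomposable.isPreconnected_compl [CompactSpace X] [T2Space X] [ConnectedSpace X]
    (hX : Indecomposable X) {K : Set X} (hK : IsProperSubcontinuum K) : IsPreconnected Kᶜ := by
  intro u v hu hv hKuv hKu hKv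
  by_contra huv
  have hKo : IsOpen Kᶜ := hK.isCompact.isClosed.isOpen_compl
  have hdisj : Disjoint (Kᶜ ∩ u) (Kᶜ ∩ v) :=
    disjoint_left.2 fun x ⟨hxK, hxu⟩ ⟨_, hxv⟩ => huv ⟨x, hxK, hxu, hxv⟩
  have hcover : Kᶜ ⊆ (Kᶜ ∩ u) ∪ (Kᶜ ∩ v) := fun x hx => (hKuv hx).imp (⟨hx, ·⟩) (⟨hx, ·⟩)
  have hKdisj : ∀ w, Disjoint K (Kᶜ ∩ w) := fun w =>
    disjoint_compl_right.mono_right inter_subset_left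
  refine hX.union_ne_univ
    (hK.isConnected.isProperSubcontinuum_compl (hKo.inter hv) (hKo.inter hu) hdisj.symm hKu
      (by rwa [union_comm]) (hKdisj u))
    (hK.isConnected.isProperSubcontinuum_compl (hKo.inter hu) (hKo.inter hv) hdisj hKv hcover
      (hKdisj v)) ?_
  rw [← compl_inter, hdisj.inter_eq, compl_empty]

theorem Indecomposable.interior_eq_empty [CompactSpace X] [T2Space X] [ConnectedSpace X]
    (hX : Indecomposable X) {K : Set X} (hK : IsProperSubcontinuum K) : interior K = ∅ := by
  by_contra hint
  have hL : IsProperSubcontinuum (closure Kᶜ) :=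
    ⟨isClosed_closure.isCompact,
      IsConnected.closure ⟨nonempty_compl.2 hK.ne_univ, hX.isPreconnected_compl hK⟩,
      by rwa [closure_compl, Ne, compl_eq_univ_sdiff, sdiff_eq_left, univ_disjoint]⟩
  refine hX.union_ne_univ hK hL ?_
  rw [← univ_subset_iff, ← union_compl_self K]
  exact union_subset_union_right K subset_closure

def composant (x : X) : Set X := {y | ∃ K, IsProperSubcontinuum K ∧ x ∈ K ∧ y ∈ K}

theorem mem_composant_comm {x y : X} : y ∈ composant x ↔ x ∈ composant y :=
  ⟨fun ⟨K, hK, hx, hy⟩ => ⟨K, hK, hy, hx⟩, fun ⟨K, hK, hy, hx⟩ => ⟨K, hK, hx, hy⟩⟩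

theorem Indecomposable.mem_composant_trans (hX : Indecomposable X) {x y z : X}
    (hy : y ∈ composant x) (hz : z ∈ composant y) : z ∈ composant x := by
  obtain ⟨K, hK, hxK, hyK⟩ := hy
  obtain ⟨L, hL, hyL, hzL⟩ := hz
  exact ⟨K ∪ L, ⟨hK.isCompact.union hL.isCompact, hK.isConnected.union ⟨y, hyK, hyL⟩ hL.isConnected,
    hX.union_ne_univ hK hL⟩, Or.inl hxK, Or.inr hzL⟩

theorem exists_mem_composant_mem_frontier [CompactSpace X] [T2Space X] [ConnectedSpace X]
    {V : Set X} (hV : IsOpen V) (hVne : V.Nonempty) {x : X} (hx : x ∉ V) :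
    ∃ z ∈ composant x, z ∈ frontier V := by
  have hVc : Vᶜ ≠ univ := compl_ne_univ.2 hVne
  obtain ⟨z, hzC, hzfr⟩ := exists_mem_connectedComponentIn_inter_frontier hV.isClosed_compl hVc hx
  exact ⟨z, ⟨_, isProperSubcontinuum_connectedComponentIn hV.isClosed_compl hVc hx,
    mem_connectedComponentIn hx, hzC⟩, frontier_compl V ▸ hzfr⟩

theorem exists_mem_composant_notMem_union [CompactSpace X] [T2Space X] [ConnectedSpace X]
    (x : X) {U V : Set X} (hU : IsOpen U) (hV : IsOpen V) (hUV : Disjoint U V)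
    (hUne : U.Nonempty) (hVne : V.Nonempty) : ∃ z ∈ composant x, z ∉ U ∪ V := by
  wlog hxV : x ∉ V generalizing U V
  · obtain ⟨z, hz, hzVU⟩ := this hV hU hUV.symm hVne hUne (disjoint_right.1 hUV (not_not.1 hxV))
    exact ⟨z, hz, by rwa [union_comm]⟩
  obtain ⟨z, hz, hzfr⟩ := exists_mem_composant_mem_frontier hV hVne hxV
  rw [hV.frontier_eq] at hzfr
  exact ⟨z, hz, fun h => h.elim ((hUV.closure_right hU).ne_of_mem · hzfr.1 rfl) hzfr.2⟩

theorem dense_of_isPreconnected_of_notMem_composant [CompactSpace X] {A : Set X}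
    (hA : IsPreconnected A) {a b : X} (ha : a ∈ A) (hb : b ∈ A) (hab : b ∉ composant a) :
    Dense A := by
  by_contra hd
  exact hab ⟨closure A, ⟨isClosed_closure.isCompact, ⟨⟨a, subset_closure ha⟩, hA.closure⟩,
    fun h => hd (dense_iff_closure_eq.2 h)⟩, subset_closure ha, subset_closure hb⟩

theorem widelyConnectedSubset_of_pairwise_notMem_composant [CompactSpace X] {W : Set X}
    (hW : IsConnected W) (hWc : W.Pairwise fun x y => y ∉ composant x) :
    WidelyConnectedSubset W := by
  refine ⟨hW, fun A hAW ⟨a, ha, b, hb, hab⟩ hA => ?_⟩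
  rw [(dense_of_isPreconnected_of_notMem_composant hA ha hb (hWc (hAW ha) (hAW hb) hab)).closure_eq]
  exact subset_univ W

theorem isClosed_setOf_mem_connectedComponentIn [CompactSpace X] [T2Space X] {F : Set X}
    (hF : IsClosed F) : IsClosed {p : X × X | p.2 ∈ connectedComponentIn F p.1} := by
  have : CompactSpace F := isCompact_iff_compactSpace.mp hF.isCompact
  have hR : IsClosed {q : F × F | ConnectedComponents.mk q.1 = ConnectedComponents.mk q.2} :=
    isClosed_eq (ConnectedComponents.continuous_coe.comp continuous_fst)
      (ConnectedComponents.continuous_coe.comp continuous_snd)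
  convert (hR.isCompact.image (continuous_subtype_val.prodMap continuous_subtype_val)).isClosed
    using 1
  ext ⟨a, b⟩
  constructor
  · intro (hb : b ∈ connectedComponentIn F a)
    have ha : a ∈ F := connectedComponentIn_nonempty_iff.1 ⟨b, hb⟩
    rw [connectedComponentIn_eq_image ha] at hb
    obtain ⟨c, hc, rfl⟩ := hb
    exact ⟨(⟨a, ha⟩, c), (ConnectedComponents.coe_eq_coe'.2 hc).symm, rfl⟩
  · rintro ⟨⟨a', b'⟩, hab, h⟩
    simp only [Prod.map, Prod.mk.injEq] at h
    obtain ⟨rfl, rfl⟩ := h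
    show (b' : X) ∈ connectedComponentIn F a'
    rw [connectedComponentIn_eq_image a'.2]
    exact ⟨b', ConnectedComponents.coe_eq_coe'.1 hab.symm, rfl⟩

theorem Indecomposable.isNowhereDense_setOf_mem_connectedComponentIn [CompactSpace X] [T2Space X]
    [ConnectedSpace X] (hX : Indecomposable X) {F : Set X} (hF : IsClosed F) (hFne : F ≠ univ) :
    IsNowhereDense {p : X × X | p.2 ∈ connectedComponentIn F p.1} := by
  rw [(isClosed_setOf_mem_connectedComponentIn hF).isNowhereDense_iff, eq_empty_iff_forall_notMem]
  rintro ⟨a, b⟩ hab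
  obtain ⟨P, Q, -, hQ, haP, hbQ, hPQ⟩ := isOpen_prod_iff.1 isOpen_interior a b hab
  have ha : a ∈ F := connectedComponentIn_nonempty_iff.1 ⟨b, (interior_subset hab :)⟩
  have hQC : Q ⊆ connectedComponentIn F a := fun q hq =>
    (interior_subset (hPQ (mk_mem_prod haP hq)) :)
  exact eq_empty_iff_forall_notMem.1
    (hX.interior_eq_empty (isProperSubcontinuum_connectedComponentIn hF hFne ha)) b
    (interior_maximal hQC hQ hbQ)

theorem isOpenMap_eval_pair {α : Type*} {a b : α} (hab : a ≠ b) :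
    IsOpenMap fun w : α → X => (w a, w b) := by
  classical
  exact IsOpenMap.of_sections fun w => ⟨fun p => update (update w a p.1) b p.2,
    ((continuous_const.update a continuous_fst).update b continuous_snd).continuousAt,
    by simp, fun p => by simp [update_of_ne hab]⟩

theorem exists_shrink_pairwise_disjoint_prod [CompactSpace X] [T2Space X] {α κ : Type*}
    [Finite α] [Finite κ] {W : α → Set X} (hW : ∀ a, IsOpen (W a)) (hWne : ∀ a, (W a).Nonempty)
    {S : κ → Set (X × X)} (hS : ∀ k, IsClosed (S k)) (hS' : ∀ k, IsNowhereDense (S k)) :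
    ∃ W' : α → Set X, (∀ a, IsOpen (W' a) ∧ (W' a).Nonempty ∧ closure (W' a) ⊆ W a) ∧
      Pairwise fun a b => ∀ k, Disjoint (closure (W' a) ×ˢ closure (W' b)) (S k) := by
  classical
  -- The bad configurations form a closed meagre subset `Z` of the Baire space `α → X`, so the
  -- open box `univ.pi W` contains a smaller open box missing `Z`.
  set Z : Set (α → X) :=
    ⋃ (p : {p : α × α // p.1 ≠ p.2}) (k : κ), (fun w => (w p.1.1, w p.1.2)) ⁻¹' S k
  have hZ : IsClosed Z := isClosed_iUnion_of_finite fun p => isClosed_iUnion_of_finite fun k =>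
    (hS k).preimage (by fun_prop)
  have hZ' : IsMeagre Z := isMeagre_iUnion fun p => isMeagre_iUnion fun k =>
    (hS' k).isMeagre.preimage_of_isOpenMap (by fun_prop) (isOpenMap_eval_pair p.2)
  have hWo : IsOpen (univ.pi W) := isOpen_set_pi finite_univ fun a _ => hW a
  obtain ⟨w, hwW, hwZ⟩ : (univ.pi W \ Z).Nonempty := by
    refine nonempty_iff_ne_empty.2 fun h => not_isMeagre_of_isOpen hWo
      (univ_pi_nonempty_iff.2 hWne) (hZ'.mono (sdiff_eq_empty.1 h))
  obtain ⟨u, hu, huWZ⟩ := isOpen_pi_iff'.1 (hWo.inter hZ.isOpen_compl) w ⟨hwW, hwZ⟩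
  have huW : ∀ a, u a ⊆ W a := (univ_pi_subset_univ_pi_iff.1 (huWZ.trans inter_subset_left))
    |>.resolve_right fun ⟨a, ha⟩ => (ha ▸ (hu a).2 : w a ∈ (∅ : Set X))
  choose W' hW' hW'u using fun a =>
    (hasBasis_opens_closure (w a)).mem_iff.1 ((hu a).1.mem_nhds (hu a).2)
  refine ⟨W', fun a => ⟨(hW' a).2, ⟨w a, (hW' a).1⟩, (hW'u a).trans (huW a)⟩, ?_⟩
  intro a b hab k
  refine disjoint_left.2 fun ⟨x, y⟩ ⟨hx, hy⟩ hxy => ?_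
  -- Moving the coordinates `a, b` of `w` to `x, y` stays in the box `univ.pi u`, hence off `Z`.
  have hv : update (update w a x) b y ∈ univ.pi u := fun c _ => by
    rcases eq_or_ne c b with rfl | hcb
    · simpa using hW'u c hy
    rcases eq_or_ne c a with rfl | hca
    · simpa [hcb] using hW'u c hx
    simpa [hcb, hca] using (hu c).2
  exact (huWZ hv).2 (mem_iUnion₂.2 ⟨⟨(a, b), hab⟩, k, by simpa [update_of_ne hab] using hxy⟩)

/-- Mycielski's theorem for compact Hausdorff spaces. -/
theorem exists_cantor_pairwise_notMem [CompactSpace X] [T2Space X] [Nonempty X]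
    {S : ℕ → Set (X × X)} (hS : ∀ n, IsClosed (S n)) (hS' : ∀ n, IsNowhereDense (S n)) :
    ∃ g : (ℕ → Bool) → X, Pairwise fun s t => ∀ n, (g s, g t) ∉ S n := by
  let Level (n : ℕ) := {V : (Fin n → Bool) → Set X // ∀ σ, IsOpen (V σ) ∧ (V σ).Nonempty}
  choose next hnext hdisj using fun n (V : Level n) =>
    exists_shrink_pairwise_disjoint_prod (W := fun σ : Fin (n + 1) → Bool => V.1 (Fin.init σ))
      (fun σ => (V.2 _).1) (fun σ => (V.2 _).2) (S := fun k : Fin (n + 1) => S k)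
      (fun k => hS k) (fun k => hS' k)
  let V : ∀ n, Level n := fun n => Nat.rec ⟨fun _ => univ, fun _ => ⟨isOpen_univ, univ_nonempty⟩⟩
    (fun n V => ⟨next n V, fun σ => ⟨(hnext n V σ).1, (hnext n V σ).2.1⟩⟩) n
  let T (s : ℕ → Bool) (n : ℕ) : Set X := closure ((V n).1 fun i => s i)
  have hT : ∀ s, (⋂ n, T s n).Nonempty := fun s =>
    IsCompact.nonempty_iInter_of_sequence_nonempty_isCompact_isClosed (T s)
      (fun n => (hnext n (V n) _).2.2.trans subset_closure)
      (fun n => ((V n).2 _).2.mono subset_closure) isClosed_closure.isCompact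
      fun n => isClosed_closure
  choose g hg using hT
  refine ⟨g, fun s t hst n hn => ?_⟩
  obtain ⟨m, hm⟩ := ne_iff.1 hst
  have hσ : (fun i : Fin (max m n + 1) => s i) ≠ fun i : Fin (max m n + 1) => t i :=
    fun h => hm (congrFun h ⟨m, by omega⟩)
  exact disjoint_left.1 (hdisj (max m n) (V (max m n)) hσ ⟨n, by omega⟩)
    ⟨mem_iInter.1 (hg s) (max m n + 1), mem_iInter.1 (hg t) (max m n + 1)⟩ hn

theorem exists_injOn_isOpen_prod_natBool [SecondCountableTopology X] :
    ∃ c : Set X × Set X → (ℕ → Bool), {p : Set X × Set X | IsOpen p.1 ∧ IsOpen p.2}.InjOn c := by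
  obtain ⟨B, hBc, -, hB⟩ := exists_countable_basis X
  have : Countable B := hBc.to_subtype
  obtain ⟨f, hf⟩ := exists_injective_nat B
  -- An open set is the union of the basic sets it contains.
  let e (U : Set X) : Set ℕ := f '' {b | (b : Set X) ⊆ U}
  have he : {U : Set X | IsOpen U}.InjOn e := fun U hU V hV hUV => by
    have h := Set.ext_iff.1 (hf.image_injective hUV)
    rw [hB.open_eq_sUnion' hU, hB.open_eq_sUnion' hV]
    congr 1
    ext s
    exact and_congr_right fun hsB => h ⟨s, hsB⟩
  let code : Set ℕ × Set ℕ ≃ (ℕ → Bool) := (Equiv.sumArrowEquivProdArrow ℕ ℕ Prop).symm.trans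
    (Equiv.arrowCongr Equiv.natSumNatEquivNat Equiv.propEquivBool)
  refine ⟨fun p => code (e p.1, e p.2), fun p hp q hq hpq => ?_⟩
  obtain ⟨h₁, h₂⟩ := Prod.mk.inj (code.injective hpq)
  exact Prod.ext (he hp.1 hq.1 h₁) (he hp.2 hq.2 h₂)

def NotCoveredByDisjointOpens (W : Set X) : Prop :=
  ∀ U V : Set X, IsOpen U → IsOpen V → Disjoint U V → U.Nonempty → V.Nonempty → ¬ W ⊆ U ∪ V

theorem NotCoveredByDisjointOpens.nontrivial [T2Space X] [Nontrivial X] {W : Set X}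
    (hW : NotCoveredByDisjointOpens W) : W.Nontrivial := by
  obtain ⟨x, y, hxy⟩ := exists_pair_ne X
  obtain ⟨U, V, hU, hV, hxU, hyV, hUV⟩ := t2_separation hxy
  obtain ⟨w, hwW, hw⟩ := not_subset.1 (hW U V hU hV hUV ⟨x, hxU⟩ ⟨y, hyV⟩)
  have hwx : w ≠ x := fun h => hw (Or.inl (h ▸ hxU))
  obtain ⟨U', V', hU', hV', hwU', hxV', hUV'⟩ := t2_separation hwx
  obtain ⟨w', hw'W, hw'⟩ := not_subset.1 (hW U' V' hU' hV' hUV' ⟨w, hwU'⟩ ⟨x, hxV'⟩)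
  exact ⟨w, hwW, w', hw'W, fun h => hw' (Or.inl (h ▸ hwU'))⟩

theorem NotCoveredByDisjointOpens.isPreconnected [CompletelyNormalSpace X] {W : Set X}
    (hW : NotCoveredByDisjointOpens W) : IsPreconnected W := by
  intro u v hu hv hWuv hWu hWv
  by_contra huv
  have hsep : Disjoint (W ∩ u) v :=
    disjoint_left.2 fun x ⟨hxW, hxu⟩ hxv => huv ⟨x, hxW, hxu, hxv⟩
  have hsep' : Disjoint u (W ∩ v) :=
    disjoint_left.2 fun x hxu ⟨hxW, hxv⟩ => huv ⟨x, hxW, hxu, hxv⟩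
  obtain ⟨U, V, hU, hV, huU, hvV, hUV⟩ := separatedNhds_iff_disjoint.2 <| completely_normal
    ((hsep.closure_left hv).mono_right inter_subset_right)
    ((hsep'.closure_right hu).mono_left inter_subset_right)
  refine hW U V hU hV hUV (hWu.mono huU) (hWv.mono hvV) fun x hx => ?_
  exact (hWuv hx).imp (fun hxu => huU ⟨hx, hxu⟩) fun hxv => hvV ⟨hx, hxv⟩

theorem Indecomposable.exists_cantor_pairwise_notMem_composant [CompactSpace X] [T2Space X]
    [ConnectedSpace X] [SecondCountableTopology X] (hX : Indecomposable X) :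
    ∃ g : (ℕ → Bool) → X, Pairwise fun s t => g t ∉ composant (g s) := by
  obtain ⟨B, hBc, hBempty, hB⟩ := exists_countable_basis X
  obtain ⟨u, rfl⟩ := hBc.exists_eq_range (.of_sUnion_eq_univ hB.sUnion_eq)
  have hu : ∀ n, IsOpen (u n) := fun n => hB.isOpen (mem_range_self n)
  have hune : ∀ n, (u n)ᶜ ≠ univ := fun n =>
    compl_ne_univ.2 (nonempty_iff_ne_empty.2 fun h => hBempty (h ▸ mem_range_self n))
  obtain ⟨g, hg⟩ := exists_cantor_pairwise_notMem
    (S := fun n => {p : X × X | p.2 ∈ connectedComponentIn (u n)ᶜ p.1})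
    (fun n => isClosed_setOf_mem_connectedComponentIn (hu n).isClosed_compl)
    fun n => hX.isNowhereDense_setOf_mem_connectedComponentIn (hu n).isClosed_compl (hune n)
  refine ⟨g, fun s t hst ⟨K, hK, hsK, htK⟩ => ?_⟩
  obtain ⟨p, hp⟩ := (ne_univ_iff_exists_notMem K).1 hK.ne_univ
  obtain ⟨_, ⟨n, rfl⟩, -, hnK⟩ :=
    hB.exists_subset_of_mem_open hp hK.isCompact.isClosed.isOpen_compl
  exact hg hst n (hK.isConnected.isPreconnected.subset_connectedComponentIn hsK
    (subset_compl_comm.1 hnK) htK)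

theorem Indecomposable.exists_pairwise_notMem_composant_notCoveredByDisjointOpens
    [CompactSpace X] [T2Space X] [ConnectedSpace X] [SecondCountableTopology X]
    (hX : Indecomposable X) :
    ∃ W : Set X, W.Pairwise (fun x y => y ∉ composant x) ∧ NotCoveredByDisjointOpens W := by
  obtain ⟨g, hg⟩ := hX.exists_cantor_pairwise_notMem_composant
  obtain ⟨c, hc⟩ := exists_injOn_isOpen_prod_natBool (X := X)
  let ι := {p : Set X × Set X //
    IsOpen p.1 ∧ IsOpen p.2 ∧ Disjoint p.1 p.2 ∧ p.1.Nonempty ∧ p.2.Nonempty}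
  choose f hf hfp using fun p : ι =>
    exists_mem_composant_notMem_union (g (c p.1)) p.2.1 p.2.2.1 p.2.2.2.1 p.2.2.2.2.1 p.2.2.2.2.2
  refine ⟨range f, ?_, fun U V hU hV hUV hUne hVne hW =>
    hfp ⟨(U, V), hU, hV, hUV, hUne, hVne⟩ (hW (mem_range_self _))⟩
  rintro _ ⟨p, rfl⟩ _ ⟨q, rfl⟩ hpq hmem
  have hcpq : c p.1 ≠ c q.1 := fun h =>
    hpq (congrArg f (Subtype.ext (hc ⟨p.2.1, p.2.2.1⟩ ⟨q.2.1, q.2.2.1⟩ h)))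
  exact hg hcpq (hX.mem_composant_trans (hX.mem_composant_trans (hf p) hmem)
    (mem_composant_comm.1 (hf q)))

end

theorem metrizable_indecomposable_has_dense_widely_connected_general {X : Type u}
    [TopologicalSpace X] [TopologicalSpace.MetrizableSpace X]
    [CompactSpace X] [ConnectedSpace X] [Nontrivial X]
    (hX : Indecomposable X) :
    ∃ W : Set X, Dense W ∧ WidelyConnectedSubset W := by
  obtain ⟨W, hWc, hW⟩ := hX.exists_pairwise_notMem_composant_notCoveredByDisjointOpens
  obtain ⟨a, ha, b, hb, hab⟩ := hW.nontrivial
  have hWconn : IsConnected W := ⟨⟨a, ha⟩, hW.isPreconnected⟩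
  exact ⟨W, dense_of_isPreconnected_of_notMem_composant hWconn.isPreconnected ha hb
    (hWc ha hb hab), widelyConnectedSubset_of_pairwise_notMem_composant hWconn hWc⟩

/-- Every nondegenerate metrizable indecomposable continuum has a dense
widely-connected subset. -/
theorem metrizable_indecomposable_has_dense_widely_connected {X : Type u}
    [TopologicalSpace X] [TopologicalSpace.MetrizableSpace X]
    [CompactSpace X] [T2Space X] [ConnectedSpace X] [Nontrivial X]
    (hX : Indecomposable X) :
    ∃ W : Set X, Dense W ∧ WidelyConnectedSubset W :=
  metrizable_indecomposable_has_dense_widely_connected_general hX
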